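/- arXiv:2504.13106 — 5 statements merged into one kernel-verified Lean document; each statement's English description precedes it below -/
import Mathlib

section
/- For every integer $n \ge 5$: if $n$ is even then $B_{n-1} > q^{2n-5} + q^{2n-6}$, and if $n$ is odd then $B_{n-1} < 3q^{2n-5} + q^{2n-6}$. -/
/-!
Grouping the recurrence in pairs removes the `q ^ (n - 3)` terms:
`B (2k + 6) = q⁴ B (2k + 4) + 3 q^(2k + 5)`. Hence `B (2k + 4) > 3 q^(4k + 5)`, which gives the
even case after one odd step, while `B (2k + 4) + q^(2k + 3) ≤ 3 q^(4k + 5) + 2 q^(4k + 3)` is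
preserved by the paired recurrence as soon as `q² ≥ 4`, and gives the odd case.
-/

def BRecurrence {R : Type*} [CommRing R] (q : R) (B : ℕ → R) : Prop :=
  ∀ n : ℕ, 5 ≤ n →
    (Even n → B n = q ^ 2 * B (n - 1) - q ^ (n - 2)) ∧
    (Odd n → B n = q ^ 2 * B (n - 1) + 3 * q ^ (n - 2) + q ^ (n - 3))

namespace BRecurrence

variable {R : Type*} [CommRing R] {q : R} {B : ℕ → R}

theorem odd_step (hrec : BRecurrence q B) (k : ℕ) :
    B (2 * k + 5) = q ^ 2 * B (2 * k + 4) + 3 * q ^ (2 * k + 3) + q ^ (2 * k + 2) :=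
  (hrec (2 * k + 5) (by omega)).2 ⟨k + 2, by ring⟩

theorem two_step (hrec : BRecurrence q B) (k : ℕ) :
    B (2 * k + 6) = q ^ 4 * B (2 * k + 4) + 3 * q ^ (2 * k + 5) := by
  have h : B (2 * k + 6) = q ^ 2 * B (2 * k + 5) - q ^ (2 * k + 4) :=
    (hrec (2 * k + 6) (by omega)).1 ⟨k + 3, by ring⟩
  rw [h, hrec.odd_step]
  ring

variable [LinearOrder R] [IsStrictOrderedRing R]

theorem three_mul_pow_lt_even (hrec : BRecurrence q B) (hq : 0 < q)
    (hB4 : B 4 = 3 * (q ^ 5 + 1)) (k : ℕ) :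
    3 * q ^ (4 * k + 5) < B (2 * k + 4) := by
  induction k with
  | zero => simp [hB4]
  | succ k ih =>
    rw [show 2 * (k + 1) + 4 = 2 * k + 6 by ring, hrec.two_step]
    have hpos := pow_pos hq (2 * k + 5)
    calc 3 * q ^ (4 * (k + 1) + 5) = q ^ 4 * (3 * q ^ (4 * k + 5)) := by ring
      _ < q ^ 4 * B (2 * k + 4) := by gcongr
      _ ≤ q ^ 4 * B (2 * k + 4) + 3 * q ^ (2 * k + 5) := by linarith

theorem even_add_pow_le (hrec : BRecurrence q B) (hq : 2 ≤ q)
    (hB4 : B 4 = 3 * (q ^ 5 + 1)) (k : ℕ) :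
    B (2 * k + 4) + q ^ (2 * k + 3) ≤ 3 * q ^ (4 * k + 5) + 2 * q ^ (4 * k + 3) := by
  induction k with
  | zero =>
    have : 2 ^ 3 ≤ q ^ 3 := pow_le_pow_left₀ (by norm_num) hq 3
    norm_num [hB4]
    linarith
  | succ k ih =>
    rw [show 2 * (k + 1) + 4 = 2 * k + 6 by ring, hrec.two_step]
    have hq2 : 4 ≤ q ^ 2 := by nlinarith
    have hpow : 4 * q ^ (2 * k + 5) ≤ q ^ (2 * k + 7) :=
      calc 4 * q ^ (2 * k + 5) ≤ q ^ 2 * q ^ (2 * k + 5) := by gcongr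
        _ = q ^ (2 * k + 7) := by ring
    calc q ^ 4 * B (2 * k + 4) + 3 * q ^ (2 * k + 5) + q ^ (2 * (k + 1) + 3)
        = q ^ 4 * (B (2 * k + 4) + q ^ (2 * k + 3)) + 4 * q ^ (2 * k + 5) - q ^ (2 * k + 7) := by
          ring
      _ ≤ q ^ 4 * (3 * q ^ (4 * k + 5) + 2 * q ^ (4 * k + 3)) := by
          have := mul_le_mul_of_nonneg_left ih (by positivity : (0 : R) ≤ q ^ 4)
          linarith
      _ = 3 * q ^ (4 * (k + 1) + 5) + 2 * q ^ (4 * (k + 1) + 3) := by ring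

theorem even_lt (hrec : BRecurrence q B) (hq : 2 ≤ q) (hB4 : B 4 = 3 * (q ^ 5 + 1)) (k : ℕ) :
    B (2 * k + 4) < 3 * q ^ (4 * k + 5) + q ^ (4 * k + 4) := by
  have hle := hrec.even_add_pow_le hq hB4 k
  have hpos := pow_pos (by positivity : (0 : R) < q) (2 * k + 3)
  have hq3 : 2 * q ^ (4 * k + 3) ≤ q ^ (4 * k + 4) :=
    calc 2 * q ^ (4 * k + 3) ≤ q * q ^ (4 * k + 3) := by gcongr
      _ = q ^ (4 * k + 4) := by ring
  linarith

theorem lt_odd (hrec : BRecurrence q B) (hq : 1 ≤ q) (hB4 : B 4 = 3 * (q ^ 5 + 1)) (k : ℕ) :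
    q ^ (4 * k + 7) + q ^ (4 * k + 6) < B (2 * k + 5) := by
  have hq0 : 0 < q := by linarith
  have hmono : q ^ (4 * k + 6) ≤ q ^ (4 * k + 7) := pow_le_pow_right₀ hq (by omega)
  have h1 := pow_pos hq0 (4 * k + 7)
  have h2 := pow_pos hq0 (2 * k + 3)
  have h3 := pow_pos hq0 (2 * k + 2)
  rw [hrec.odd_step]
  calc q ^ (4 * k + 7) + q ^ (4 * k + 6) ≤ q ^ 2 * (3 * q ^ (4 * k + 5)) := by
        linarith [show q ^ 2 * (3 * q ^ (4 * k + 5)) = 3 * q ^ (4 * k + 7) by ring]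
    _ < q ^ 2 * B (2 * k + 4) := by gcongr; exact hrec.three_mul_pow_lt_even hq0 hB4 k
    _ < _ := by linarith

end BRecurrence

theorem stmt_1 (q : ℤ) (hq : 2 ≤ q) (B : ℕ → ℤ)
    (hB4 : B 4 = 3 * (q ^ 5 + 1))
    (hrec : ∀ n : ℕ, 5 ≤ n →
      (Even n → B n = q ^ 2 * B (n - 1) - q ^ (n - 2)) ∧
      (Odd n → B n = q ^ 2 * B (n - 1) + 3 * q ^ (n - 2) + q ^ (n - 3))) :
    ∀ n : ℕ, 5 ≤ n →
      (Even n → B (n - 1) > q ^ (2 * n - 5) + q ^ (2 * n - 6)) ∧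
      (Odd n → B (n - 1) < 3 * q ^ (2 * n - 5) + q ^ (2 * n - 6)) := by
  have hB : BRecurrence q B := hrec
  intro n hn
  obtain ⟨k, rfl | rfl⟩ : ∃ k, n = 2 * k + 5 ∨ n = 2 * k + 6 := ⟨(n - 5) / 2, by omega⟩
  · refine ⟨fun h => absurd h (Nat.not_even_iff_odd.2 ⟨k + 2, by ring⟩), fun _ => ?_⟩
    rw [show 2 * (2 * k + 5) - 5 = 4 * k + 5 by omega, show 2 * (2 * k + 5) - 6 = 4 * k + 4 by omega]
    exact hB.even_lt hq hB4 k
  · refine ⟨fun _ => ?_, fun h => absurd h (Nat.not_odd_iff_even.2 ⟨k + 3, by ring⟩)⟩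
    rw [show 2 * (2 * k + 6) - 5 = 4 * k + 7 by omega, show 2 * (2 * k + 6) - 6 = 4 * k + 6 by omega]
    exact hB.lt_odd (by linarith) hB4 k
end

section
/- For every even integer $n \ge 4$ and every integer $q \ge 3$, the inequality $\frac{q^{2n-1}+q^n-q^{n-1}-1}{q^2-1} + A_n < B_n$ holds, where $A_n$ and $B_n$ are as defined. -/
/-!
With `D n = B n - A n`, the two recurrences give `D (n + 2) = q ^ 4 D n + q ^ n (2 q - 1)` for even
`n`, while the point count satisfies `H (n + 2) = q ^ 4 H n + q ^ 2 + 1 - q ^ (n + 1) (q - 1)`. So the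
gap `D n - H n` is multiplied by `q ^ 4` and then increased at every double step. At `n = 4`, where
`H 4 = (q ^ 3 + 1) (q ^ 2 + 1)`, the gap is `q ^ 5 - q ^ 4 - 5 q ^ 3 - q ^ 2 + 3 q + 1 > 0` for `q ≥ 3`.
-/

section

variable {K : Type*} [Field K]

def hermitianPointCount (q : K) (n : ℕ) : K :=
  (q ^ (2 * n - 1) + q ^ n - q ^ (n - 1) - 1) / (q ^ 2 - 1)

theorem hermitianPointCount_four {q : K} (hq : q ^ 2 - 1 ≠ 0) :
    hermitianPointCount q 4 = (q ^ 3 + 1) * (q ^ 2 + 1) := by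
  rw [hermitianPointCount, div_eq_iff hq]
  ring

theorem hermitianPointCount_add_two {q : K} (hq : q ^ 2 - 1 ≠ 0) (n : ℕ) :
    hermitianPointCount q (n + 1 + 2) =
      q ^ 4 * hermitianPointCount q (n + 1) + q ^ 2 + 1 - q ^ (n + 2) * (q - 1) := by
  simp only [hermitianPointCount, show 2 * (n + 1 + 2) - 1 = 2 * n + 5 by omega,
    show 2 * (n + 1) - 1 = 2 * n + 1 by omega, show n + 1 + 2 - 1 = n + 2 by omega,
    Nat.add_sub_cancel]
  field_simp
  ring

end

theorem sub_add_two_eq_of_rec {R : Type*} [CommRing R] (q : R) (A B : ℕ → R)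
    (hrecA : ∀ m : ℕ, 5 ≤ m →
      (Even m → A m = q ^ 2 * A (m - 1) - q ^ (m - 2)) ∧
      (Odd m → A m = q ^ 2 * A (m - 1) + q ^ (m - 2) + 2 * q ^ (m - 3)))
    (hrecB : ∀ m : ℕ, 5 ≤ m →
      (Even m → B m = q ^ 2 * B (m - 1) - q ^ (m - 2)) ∧
      (Odd m → B m = q ^ 2 * B (m - 1) + 3 * q ^ (m - 2) + q ^ (m - 3)))
    (k : ℕ) :
    B (2 * k + 6) - A (2 * k + 6) =
      q ^ 4 * (B (2 * k + 4) - A (2 * k + 4)) + q ^ (2 * k + 4) * (2 * q - 1) := by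
  have hoA := (hrecA (2 * k + 5) (by omega)).2 ⟨k + 2, by ring⟩
  have hoB := (hrecB (2 * k + 5) (by omega)).2 ⟨k + 2, by ring⟩
  have heA := (hrecA (2 * k + 6) (by omega)).1 ⟨k + 3, by ring⟩
  have heB := (hrecB (2 * k + 6) (by omega)).1 ⟨k + 3, by ring⟩
  simp only [show 2 * k + 5 - 1 = 2 * k + 4 by omega, show 2 * k + 5 - 2 = 2 * k + 3 by omega,
    show 2 * k + 5 - 3 = 2 * k + 2 by omega, show 2 * k + 6 - 1 = 2 * k + 5 by omega,
    show 2 * k + 6 - 2 = 2 * k + 4 by omega] at hoA hoB heA heB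
  rw [heA, heB, hoA, hoB]
  ring

theorem hermitianPointCount_lt_sub {K : Type*} [Field K] [LinearOrder K] [IsStrictOrderedRing K]
    {q : K} (hq : 3 ≤ q) (A B : ℕ → K)
    (hA4 : A 4 = q ^ 5 + q ^ 4 + 4 * q ^ 3 - 3 * q + 1) (hB4 : B 4 = 3 * (q ^ 5 + 1))
    (hrecA : ∀ m : ℕ, 5 ≤ m →
      (Even m → A m = q ^ 2 * A (m - 1) - q ^ (m - 2)) ∧
      (Odd m → A m = q ^ 2 * A (m - 1) + q ^ (m - 2) + 2 * q ^ (m - 3)))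
    (hrecB : ∀ m : ℕ, 5 ≤ m →
      (Even m → B m = q ^ 2 * B (m - 1) - q ^ (m - 2)) ∧
      (Odd m → B m = q ^ 2 * B (m - 1) + 3 * q ^ (m - 2) + q ^ (m - 3)))
    (k : ℕ) :
    hermitianPointCount q (2 * k + 4) < B (2 * k + 4) - A (2 * k + 4) := by
  have hq2 : q ^ 2 - 1 ≠ 0 := by nlinarith
  induction k with
  | zero =>
    rw [hermitianPointCount_four hq2, hA4, hB4]
    nlinarith [mul_nonneg (mul_nonneg (sub_nonneg.2 hq) (sub_nonneg.2 hq))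
      (pow_nonneg (by linarith : (0 : K) ≤ q) 3)]
  | succ k ih =>
    set N := 2 * k + 4
    have hq0 : 0 < q := by linarith
    have hpow : q ^ 2 ≤ q ^ N := pow_le_pow_right₀ (by linarith) (by omega)
    have hgap : q ^ 4 * hermitianPointCount q N < q ^ 4 * (B N - A N) :=
      mul_lt_mul_of_pos_left ih (by positivity)
    have hgrow : q ^ 2 + 1 < q ^ N * (2 * q - 1) + q ^ (N + 1) * (q - 1) := by
      have : 0 ≤ q ^ (N + 1) * (q - 1) := mul_nonneg (by positivity) (by linarith)
      nlinarith [mul_le_mul_of_nonneg_right hpow (by linarith : (0 : K) ≤ 2 * q - 1)]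
    rw [show 2 * (k + 1) + 4 = 2 * k + 3 + 1 + 2 by ring, hermitianPointCount_add_two hq2,
      show 2 * k + 3 + 1 + 2 = 2 * k + 6 by ring, sub_add_two_eq_of_rec q A B hrecA hrecB k]
    linarith

theorem stmt_3 (q : ℤ) (hq : 3 ≤ q) (A B : ℕ → ℚ)
    (hA4 : A 4 = (q : ℚ) ^ 5 + (q : ℚ) ^ 4 + 4 * (q : ℚ) ^ 3 - 3 * (q : ℚ) + 1)
    (hB4 : B 4 = 3 * ((q : ℚ) ^ 5 + 1))
    (hrecA : ∀ m : ℕ, 5 ≤ m →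
      (Even m → A m = (q : ℚ) ^ 2 * A (m - 1) - (q : ℚ) ^ (m - 2)) ∧
      (Odd m → A m = (q : ℚ) ^ 2 * A (m - 1) + (q : ℚ) ^ (m - 2) + 2 * (q : ℚ) ^ (m - 3)))
    (hrecB : ∀ m : ℕ, 5 ≤ m →
      (Even m → B m = (q : ℚ) ^ 2 * B (m - 1) - (q : ℚ) ^ (m - 2)) ∧
      (Odd m → B m = (q : ℚ) ^ 2 * B (m - 1) + 3 * (q : ℚ) ^ (m - 2) + (q : ℚ) ^ (m - 3)))
    (n : ℕ) (hn : 4 ≤ n) (hne : Even n) :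
    ((q : ℚ) ^ (2 * n - 1) + (q : ℚ) ^ n - (q : ℚ) ^ (n - 1) - 1) / ((q : ℚ) ^ 2 - 1)
      + A n < B n := by
  obtain ⟨k, rfl⟩ : ∃ k, n = 2 * k + 4 := by
    obtain ⟨j, rfl⟩ := hne
    exact ⟨j - 2, by omega⟩
  have := hermitianPointCount_lt_sub (by exact_mod_cast hq) A B hA4 hB4 hrecA hrecB k
  rw [hermitianPointCount] at this
  linarith
end

section
/- For every odd integer $n \ge 5$ and every integer $q \ge 3$, the inequality $\frac{q^{2n-1}+q^{n+1}-q^n-1}{q^2-1} + A_n < B_n$ holds, where $A_n$ and $B_n$ are as defined. -/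
/-!
Put `D m = B m - A m`. The recurrences give `D m = q² D (m - 1)` for even `m` and
`D m = q² D (m - 1) + (2q - 1) q^(m - 3)` for odd `m`, hence along odd indices
`D (n + 2) = q⁴ D n + (2q - 1) q^(n - 1)`. With `N n = q^(2n-1) + q^(n+1) - q^n - 1`,
the gap `G n = (q² - 1) D n - N n` then satisfies
`G (n + 2) = q⁴ G n + q^(n - 1) P(q) - (q⁴ - 1)` with
`P(q) = q⁶ - q⁵ - q⁴ + 3q³ - q² - 2q + 1 ≥ 1`, so `G (n + 2) > q⁴ G n`.
Since `G 5 > 0` for `q ≥ 3`, induction gives `G n > 0` for all odd `n ≥ 5`.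
-/

section Recurrence

variable {K : Type*} [Field K] (q : K) {A B : ℕ → K}

theorem sub_five_of_recurrence
    (hA4 : A 4 = q ^ 5 + q ^ 4 + 4 * q ^ 3 - 3 * q + 1) (hB4 : B 4 = 3 * (q ^ 5 + 1))
    (hA5 : A 5 = q ^ 2 * A 4 + q ^ 3 + 2 * q ^ 2)
    (hB5 : B 5 = q ^ 2 * B 4 + 3 * q ^ 3 + q ^ 2) :
    B 5 - A 5 = 2 * q ^ 7 - q ^ 6 - 4 * q ^ 5 + 5 * q ^ 3 + q ^ 2 := by
  rw [hA5, hB5, hA4, hB4]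
  ring

theorem sub_add_two_of_recurrence
    (hrecA : ∀ m : ℕ, 5 ≤ m →
      (Even m → A m = q ^ 2 * A (m - 1) - q ^ (m - 2)) ∧
      (Odd m → A m = q ^ 2 * A (m - 1) + q ^ (m - 2) + 2 * q ^ (m - 3)))
    (hrecB : ∀ m : ℕ, 5 ≤ m →
      (Even m → B m = q ^ 2 * B (m - 1) - q ^ (m - 2)) ∧
      (Odd m → B m = q ^ 2 * B (m - 1) + 3 * q ^ (m - 2) + q ^ (m - 3)))
    (k : ℕ) :
    B (2 * k + 7) - A (2 * k + 7)
      = q ^ 4 * (B (2 * k + 5) - A (2 * k + 5)) + (2 * q - 1) * q ^ (2 * k + 4) := by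
  have hA6 := (hrecA (2 * k + 6) (by omega)).1 ⟨k + 3, by ring⟩
  have hB6 := (hrecB (2 * k + 6) (by omega)).1 ⟨k + 3, by ring⟩
  have hA7 := (hrecA (2 * k + 7) (by omega)).2 ⟨k + 3, by ring⟩
  have hB7 := (hrecB (2 * k + 7) (by omega)).2 ⟨k + 3, by ring⟩
  simp only [show 2 * k + 6 - 1 = 2 * k + 5 by omega, show 2 * k + 6 - 2 = 2 * k + 4 by omega,
    show 2 * k + 7 - 1 = 2 * k + 6 by omega, show 2 * k + 7 - 2 = 2 * k + 5 by omega,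
    show 2 * k + 7 - 3 = 2 * k + 4 by omega] at hA6 hB6 hA7 hB7
  rw [hA7, hB7, hA6, hB6]
  ring

end Recurrence

section Inequality

variable {K : Type*} [Field K] [LinearOrder K] [IsStrictOrderedRing K] {q : K}

theorem one_le_sextic (hq : 3 ≤ q) :
    1 ≤ q ^ 6 - q ^ 5 - q ^ 4 + 3 * q ^ 3 - q ^ 2 - 2 * q + 1 := by
  have hq0 : 0 < q := by linarith
  nlinarith [pow_pos hq0 3, pow_pos hq0 4, sq_nonneg (q ^ 2 - q), pow_pos hq0 5]

theorem gap_pos_five (hq : 3 ≤ q) :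
    q ^ 9 + q ^ 6 - q ^ 5 - 1
      < (2 * q ^ 7 - q ^ 6 - 4 * q ^ 5 + 5 * q ^ 3 + q ^ 2) * (q ^ 2 - 1) := by
  have hq0 : 0 < q := by linarith
  -- the leading part of the gap is `q⁷ (q - 3) (q + 2)`
  have hlead : 0 ≤ q ^ 7 * ((q - 3) * (q + 2)) :=
    mul_nonneg (pow_nonneg hq0.le 7) (mul_nonneg (by linarith) (by linarith))
  nlinarith [pow_pos hq0 2, pow_pos hq0 3, pow_pos hq0 4, pow_pos hq0 5]

theorem gap_pos_add_two (hq : 3 ≤ q) (k : ℕ) {D D' : K}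
    (hD' : D' = q ^ 4 * D + (2 * q - 1) * q ^ (2 * k + 4))
    (h : q ^ (4 * k + 9) + q ^ (2 * k + 6) - q ^ (2 * k + 5) - 1 < D * (q ^ 2 - 1)) :
    q ^ (4 * (k + 1) + 9) + q ^ (2 * (k + 1) + 6) - q ^ (2 * (k + 1) + 5) - 1
      < D' * (q ^ 2 - 1) := by
  have hq0 : 0 < q := by linarith
  set X := q ^ (2 * k + 4) with hX
  have hX4 : q ^ 4 ≤ X := pow_le_pow_right₀ (by linarith) (by omega)
  have hXP : q ^ 4 ≤ X * (q ^ 6 - q ^ 5 - q ^ 4 + 3 * q ^ 3 - q ^ 2 - 2 * q + 1) := by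
    simpa using mul_le_mul hX4 (one_le_sextic hq) zero_le_one (by positivity)
  have e1 : q ^ (4 * k + 9) = q * X ^ 2 := by rw [hX]; ring
  have e2 : q ^ (4 * (k + 1) + 9) = q ^ 5 * X ^ 2 := by rw [hX]; ring
  have e3 : q ^ (2 * (k + 1) + 6) = q ^ 4 * X := by rw [hX]; ring
  have e4 : q ^ (2 * (k + 1) + 5) = q ^ 3 * X := by rw [hX]; ring
  have e5 : q ^ (2 * k + 6) = q ^ 2 * X := by rw [hX]; ring
  have e6 : q ^ (2 * k + 5) = q * X := by rw [hX]; ring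
  rw [e1, e5, e6] at h
  rw [e2, e3, e4, hD']
  nlinarith [mul_lt_mul_of_pos_left h (pow_pos hq0 4)]

end Inequality

theorem stmt_4 (q : ℤ) (hq : 3 ≤ q) (A B : ℕ → ℚ)
    (hA4 : A 4 = (q : ℚ) ^ 5 + (q : ℚ) ^ 4 + 4 * (q : ℚ) ^ 3 - 3 * (q : ℚ) + 1)
    (hB4 : B 4 = 3 * ((q : ℚ) ^ 5 + 1))
    (hrecA : ∀ m : ℕ, 5 ≤ m →
      (Even m → A m = (q : ℚ) ^ 2 * A (m - 1) - (q : ℚ) ^ (m - 2)) ∧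
      (Odd m → A m = (q : ℚ) ^ 2 * A (m - 1) + (q : ℚ) ^ (m - 2) + 2 * (q : ℚ) ^ (m - 3)))
    (hrecB : ∀ m : ℕ, 5 ≤ m →
      (Even m → B m = (q : ℚ) ^ 2 * B (m - 1) - (q : ℚ) ^ (m - 2)) ∧
      (Odd m → B m = (q : ℚ) ^ 2 * B (m - 1) + 3 * (q : ℚ) ^ (m - 2) + (q : ℚ) ^ (m - 3)))
    (n : ℕ) (hn : 5 ≤ n) (hno : Odd n) :
    ((q : ℚ) ^ (2 * n - 1) + (q : ℚ) ^ (n + 1) - (q : ℚ) ^ n - 1) / ((q : ℚ) ^ 2 - 1)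
      + A n < B n := by
  have hq' : (3 : ℚ) ≤ q := by exact_mod_cast hq
  have gap : ∀ k : ℕ, (q : ℚ) ^ (4 * k + 9) + (q : ℚ) ^ (2 * k + 6) - (q : ℚ) ^ (2 * k + 5) - 1
      < (B (2 * k + 5) - A (2 * k + 5)) * ((q : ℚ) ^ 2 - 1) := by
    intro k
    induction k with
    | zero =>
      have h5 := sub_five_of_recurrence (q : ℚ) hA4 hB4
        ((hrecA 5 le_rfl).2 (by decide)) ((hrecB 5 le_rfl).2 (by decide))
      simpa [h5] using gap_pos_five hq'
    | succ k ih => exact gap_pos_add_two hq' k (sub_add_two_of_recurrence _ hrecA hrecB k) ih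
  obtain ⟨k, rfl⟩ : ∃ k, n = 2 * k + 5 := by
    obtain ⟨j, hj⟩ := hno
    exact ⟨j - 2, by omega⟩
  rw [← lt_sub_iff_add_lt, div_lt_iff₀ (by nlinarith),
    show 2 * (2 * k + 5) - 1 = 4 * k + 9 by omega, show 2 * k + 5 + 1 = 2 * k + 6 by omega]
  exact gap k
end

section
/- Let $q \ge 2$ and $n \ge 2$. The number of $\mathbb{F}_{q^2}$-rational points of a non-degenerate Hermitian variety $\mathcal{U}_n$ in $\mathbb{P}^n(\mathbb{F}_{q^2})$, i.e., the number of points $[x_0 : \dots : x_n] \in \mathbb{P}^n(\mathbb{F}_{q^2})$ with $x_0^{q+1} + x_1^{q+1} + \dots + x_n^{q+1} = 0$, equals $\frac{(q^n - (-1)^n)(q^{n+1} - (-1)^{n+1})}{q^2 - 1}$. -/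
/-!
Write `N_m(c)` for the number of `v ∈ F^m` with `∑ vᵢ^(q+1) = c`. Since `x ↦ x^q` is a field
automorphism of order two, `x ↦ x^(q+1)` is the norm onto the fixed field `{c | c^q = c}` and is
onto its nonzero part, so `N_m(c)` vanishes off the fixed field and is constant on its `q - 1`
nonzero elements. Counting all vectors gives `N_m(0) + (q-1) N_m(1) = q^(2m)`, splitting off the
first coordinate gives `N_{m+1}(0) = N_m(0) + (q²-1) N_m(1)`, and together they give
`q N_m(0) = q^(2m) + (-1)^m (q-1) q^m`. Each projective point has `q² - 1` nonzero representatives.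
-/

open Finset
open scoped LinearAlgebra.Projectivization

theorem IsCyclic.range_powMonoidHom_eq_ker {G : Type*} [CommGroup G] [IsCyclic G] [Finite G]
    {a b : ℕ} (h : Nat.card G = a * b) :
    (powMonoidHom a : G →* G).range = (powMonoidHom b).ker := by
  have ha : a ≠ 0 := left_ne_zero_of_mul (h ▸ Nat.card_pos.ne')
  refine Subgroup.eq_of_le_of_card_ge ?_ ?_
  · rintro _ ⟨x, rfl⟩
    simp [← pow_mul, ← h, pow_card_eq_one']
  · rw [IsCyclic.card_powMonoidHom_ker, IsCyclic.card_powMonoidHom_range, h,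
      Nat.gcd_mul_left_left, Nat.gcd_mul_right_left, Nat.mul_div_cancel_left _ ha.bot_lt]

theorem Projectivization.ncard_setOf_rep_mem_mul {k V : Type*} [Field k] [AddCommGroup V]
    [Module k V] {s : Set V} (hs : ∀ (a : kˣ) (v : V), a • v ∈ s ↔ v ∈ s) :
    {x : ℙ k V | x.rep ∈ s}.ncard * Nat.card kˣ = (s \ {0}).ncard := by
  let e := nonZeroEquivProjectivizationProdUnits k V
  have he : ∀ w : {v : V // v ≠ 0}, w.1 ∈ s ↔ (e w).1 ∈ {x : ℙ k V | x.rep ∈ s} := by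
    intro w
    obtain ⟨a, ha⟩ := exists_smul_eq_mk_rep k w.1 w.2
    exact (ha ▸ hs a w).symm
  rw [← Nat.card_coe_set_eq, ← Nat.card_coe_set_eq, ← Nat.card_prod]
  refine Nat.card_congr <|
    (Equiv.prodSubtypeFstEquivSubtypeProd.symm.trans (e.subtypeEquiv he).symm).trans ?_
  exact (Equiv.subtypeSubtypeEquivSubtypeInter (· ≠ 0) (· ∈ s)).trans
    (Equiv.subtypeEquivRight fun v => by simp [and_comm])

namespace FiniteField

variable {F : Type*} [Field F] [Fintype F]

theorem natCard_pow_eq_one {d : ℕ} (hd : d ∣ Fintype.card F - 1) :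
    Nat.card {c : F // c ^ d = 1} = d := by
  have hd0 : 0 < d := Nat.pos_of_dvd_of_pos hd (by simpa using Fintype.one_lt_card (α := F))
  have : NeZero d := ⟨hd0.ne'⟩
  calc Nat.card {c : F // c ^ d = 1}
      = Nat.card (rootsOfUnity d F) :=
        Nat.card_congr <|
          (Equiv.subtypeEquivRight fun _ => (Polynomial.mem_nthRoots hd0).symm).trans
            (rootsOfUnityEquivNthRoots F d).symm
    _ = d := by
        rw [rootsOfUnity_eq_ker, IsCyclic.card_powMonoidHom_ker, Nat.card_units,
          Nat.card_eq_fintype_card, Nat.gcd_eq_right hd]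

variable {q : ℕ} (hF : Fintype.card F = q ^ 2)
include hF

theorem one_lt_of_card_eq_sq : 1 < q := by
  have := Fintype.one_lt_card (α := F)
  rw [hF] at this
  by_contra! h
  interval_cases q <;> simp at this

theorem exists_ringHom_eq_pow : ∃ φ : F →+* F, ∀ x, φ x = x ^ q := by
  obtain ⟨p, _⟩ := CharP.exists F
  obtain ⟨n, hp, hcard⟩ := FiniteField.card F p
  have : Fact p.Prime := ⟨hp⟩
  obtain ⟨i, -, rfl⟩ := (Nat.dvd_prime_pow hp).1 (hcard ▸ hF ▸ Dvd.intro_left _ (sq q).symm)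
  exact ⟨iterateFrobenius F p i, iterateFrobenius_def p i⟩

theorem pow_add_one_pow_eq_self (x : F) : (x ^ (q + 1)) ^ q = x ^ (q + 1) := by
  rw [← pow_mul, add_mul, one_mul, ← sq, pow_add, ← hF, FiniteField.pow_card, pow_succ']

theorem exists_pow_add_one_eq {c : F} (hc0 : c ≠ 0) (hc : c ^ q = c) :
    ∃ a : F, a ^ (q + 1) = c := by
  have hcard : Nat.card Fˣ = (q + 1) * (q - 1) := by
    rw [Nat.card_units, Nat.card_eq_fintype_card, hF, ← Nat.sq_sub_sq, one_pow]
  have hker : Units.mk0 c hc0 ∈ (powMonoidHom (q - 1) : Fˣ →* Fˣ).ker := by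
    rw [MonoidHom.mem_ker, powMonoidHom_apply, ← Units.val_inj, Units.val_pow_eq_pow_val,
      Units.val_mk0, Units.val_one, ← mul_left_inj' hc0, one_mul,
      pow_sub_one_mul (one_lt_of_card_eq_sq hF).ne_bot, hc]
  obtain ⟨a, ha⟩ := (IsCyclic.range_powMonoidHom_eq_ker hcard).ge hker
  exact ⟨a, by simpa using congrArg Units.val ha⟩

end FiniteField

section HermitianCount

open FiniteField

variable {F : Type*} [Field F]

noncomputable def hermitianCount (q m : ℕ) (c : F) : ℕ :=
  Nat.card {v : Fin m → F // ∑ i, v i ^ (q + 1) = c}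

theorem hermitianCount_mul_pow (q m : ℕ) {a : F} (ha : a ≠ 0) (c : F) :
    hermitianCount q m (a ^ (q + 1) * c) = hermitianCount q m c := by
  refine (Nat.card_congr (Equiv.subtypeEquiv (MulAction.toPerm (Units.mk0 a ha)) fun v => ?_)).symm
  simp [Units.smul_def, mul_pow, ← Finset.mul_sum, ha]

variable [Fintype F]

theorem hermitianCount_succ_zero_eq_sum (q m : ℕ) :
    hermitianCount q (m + 1) (0 : F) = ∑ a : F, hermitianCount q m (-(a ^ (q + 1))) := by
  simp only [hermitianCount]
  rw [← Nat.card_sigma]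
  refine Nat.card_congr ((Equiv.subtypeEquiv (Fin.consEquiv fun _ => F).symm fun v => ?_).trans
    (Equiv.subtypeProdEquivSigmaSubtype fun a (w : Fin m → F) =>
      ∑ i, w i ^ (q + 1) = -(a ^ (q + 1))))
  simp [Fin.sum_univ_succ, Fin.tail, eq_neg_iff_add_eq_zero, add_comm]

theorem sum_hermitianCount (q m : ℕ) : ∑ c : F, hermitianCount q m c = Fintype.card F ^ m := by
  simp only [hermitianCount]
  rw [← Nat.card_sigma, Nat.card_congr (Equiv.sigmaFiberEquiv _)]
  simp

variable {q : ℕ} (hF : Fintype.card F = q ^ 2)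
include hF

theorem hermitianCount_eq_zero (m : ℕ) {c : F} (hc : c ^ q ≠ c) : hermitianCount q m c = 0 := by
  obtain ⟨φ, hφ⟩ := exists_ringHom_eq_pow hF
  have : IsEmpty {v : Fin m → F // ∑ i, v i ^ (q + 1) = c} := ⟨fun v => hc ?_⟩
  · exact Nat.card_of_isEmpty
  rw [← v.2, ← hφ, map_sum]
  exact Finset.sum_congr rfl fun i _ => by rw [hφ, pow_add_one_pow_eq_self hF]

theorem hermitianCount_eq_hermitianCount_one (m : ℕ) {c : F} (hc0 : c ≠ 0) (hc : c ^ q = c) :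
    hermitianCount q m c = hermitianCount q m (1 : F) := by
  obtain ⟨a, rfl⟩ := exists_pow_add_one_eq hF hc0 hc
  simpa using hermitianCount_mul_pow q m (a := a) (by rintro rfl; simp at hc0) 1

theorem hermitianCount_succ_zero (m : ℕ) :
    hermitianCount q (m + 1) (0 : F) =
      hermitianCount q m (0 : F) + (q ^ 2 - 1) * hermitianCount q m (1 : F) := by
  classical
  obtain ⟨φ, hφ⟩ := exists_ringHom_eq_pow hF
  have hnorm : ∀ a ∈ univ.erase (0 : F),
      hermitianCount q m (-(a ^ (q + 1))) = hermitianCount q m (1 : F) :=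
    fun a ha => hermitianCount_eq_hermitianCount_one hF m (by simpa using ne_of_mem_erase ha)
      (by rw [← hφ, map_neg, hφ, pow_add_one_pow_eq_self hF])
  rw [hermitianCount_succ_zero_eq_sum, ← add_sum_erase _ _ (mem_univ 0), sum_congr rfl hnorm,
    sum_const, card_erase_of_mem (mem_univ 0), card_univ, hF, smul_eq_mul, zero_pow (by omega),
    neg_zero]

theorem hermitianCount_zero_add (m : ℕ) :
    hermitianCount q m (0 : F) + (q - 1) * hermitianCount q m (1 : F) = q ^ (2 * m) := by
  classical
  have hq : q - 1 ≠ 0 := by have := one_lt_of_card_eq_sq hF; omega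
  have hsplit : ∀ c : F, hermitianCount q m c =
      (if c = 0 then hermitianCount q m (0 : F) else 0) +
        (if c ^ (q - 1) = 1 then hermitianCount q m (1 : F) else 0) := fun c => by
    by_cases hc0 : c = 0
    · simp [hc0, zero_pow hq]
    have hfix : c ^ (q - 1) = 1 ↔ c ^ q = c := by
      rw [← pow_sub_one_mul (n := q) (by omega) c, mul_eq_right₀ hc0]
    by_cases hc : c ^ q = c
    · simp [hc0, hfix.2 hc, hermitianCount_eq_hermitianCount_one hF m hc0 hc]
    · simp [hc0, hfix, hc, hermitianCount_eq_zero hF m hc]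
  have hroots : #{c : F | c ^ (q - 1) = 1} = q - 1 := by
    rw [← Fintype.card_subtype, ← Nat.card_eq_fintype_card]
    exact natCard_pow_eq_one (hF ▸ ⟨q + 1, by simpa [mul_comm] using Nat.sq_sub_sq q 1⟩)
  rw [pow_mul, ← hF, ← sum_hermitianCount, sum_congr rfl fun c _ => hsplit c, sum_add_distrib,
    sum_ite_eq', if_pos (mem_univ _), sum_ite, sum_const, sum_const_zero, add_zero, hroots,
    smul_eq_mul]

theorem hermitianCount_zero_mul (m : ℕ) :
    (hermitianCount q m (0 : F) : ℤ) * q =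
      (q : ℤ) ^ (2 * m) + (-1) ^ m * ((q : ℤ) - 1) * (q : ℤ) ^ m := by
  have hq : 1 ≤ q := (one_lt_of_card_eq_sq hF).le
  induction m with
  | zero => simp [hermitianCount]
  | succ m ih =>
    have hsucc := hermitianCount_succ_zero hF m
    have htotal := hermitianCount_zero_add hF m
    zify [hq, one_le_pow₀ (M₀ := ℕ) hq] at hsucc htotal
    rw [hsucc]
    linear_combination (-(q : ℤ)) * ih + ((q : ℤ) + 1) * (q : ℤ) * htotal

theorem ncard_setOf_hermitian_mul_add_one (m : ℕ) :
    {x : ℙ F (Fin m → F) | ∑ i, x.rep i ^ (q + 1) = 0}.ncard * (q ^ 2 - 1) + 1 =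
      hermitianCount q m (0 : F) := by
  set S : Set (Fin m → F) := {v | ∑ i, v i ^ (q + 1) = 0}
  have hS : ∀ (a : Fˣ) v, a • v ∈ S ↔ v ∈ S := fun a v => by
    simp [S, Units.smul_def, mul_pow, ← Finset.mul_sum]
  rw [← hF, ← Nat.card_eq_fintype_card, ← Nat.card_units]
  change {x : ℙ F (Fin m → F) | x.rep ∈ S}.ncard * _ + 1 = _
  rw [Projectivization.ncard_setOf_rep_mem_mul hS,
    Set.ncard_sdiff_singleton_add_one (by simp [S]) (Set.toFinite S)]
  rfl

end HermitianCount

theorem stmt_5_general (q n : ℕ)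
    (F : Type) [Field F] [Fintype F] (hF : Fintype.card F = q ^ 2) :
    (({x : Projectivization F (Fin (n + 1) → F) |
        ∑ i, (x.rep i) ^ (q + 1) = 0}.ncard : ℤ)) =
      ((q : ℤ) ^ n - (-1) ^ n) * ((q : ℤ) ^ (n + 1) - (-1) ^ (n + 1)) / ((q : ℤ) ^ 2 - 1) := by
  have hq := FiniteField.one_lt_of_card_eq_sq hF
  have hproj := ncard_setOf_hermitian_mul_add_one hF (n + 1)
  have hcount := hermitianCount_zero_mul hF (n + 1)
  zify [one_le_pow₀ (M₀ := ℕ) hq.le] at hproj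
  have hsq : ((-1 : ℤ) ^ n) ^ 2 = 1 := by rw [← pow_mul, mul_comm, pow_mul, neg_one_sq, one_pow]
  have hnum : ((q : ℤ) ^ n - (-1) ^ n) * ((q : ℤ) ^ (n + 1) - (-1) ^ (n + 1)) =
      ((q : ℤ) ^ 2 - 1) *
        {x : ℙ F (Fin (n + 1) → F) | ∑ i, x.rep i ^ (q + 1) = 0}.ncard := by
    refine mul_right_cancel₀ (by positivity : (q : ℤ) ≠ 0) ?_
    linear_combination (-(q : ℤ)) * hproj - hcount - (q : ℤ) * hsq
  rw [hnum, Int.mul_ediv_cancel_left _ (by nlinarith)]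

theorem stmt_5 (q n : ℕ) (hq : 2 ≤ q) (hn : 2 ≤ n)
    (hpp : ∃ p k : ℕ, p.Prime ∧ 0 < k ∧ q = p ^ k)
    (F : Type) [Field F] [Fintype F] (hF : Fintype.card F = q ^ 2) :
    (({x : Projectivization F (Fin (n + 1) → F) |
        ∑ i, (x.rep i) ^ (q + 1) = 0}.ncard : ℤ)) =
      ((q : ℤ) ^ n - (-1) ^ n) * ((q : ℤ) ^ (n + 1) - (-1) ^ (n + 1)) / ((q : ℤ) ^ 2 - 1) :=
  stmt_5_general q n F hF
end

section
/- For a non-degenerate Hermitian curve, i.e., the curve $\mathcal{U}_2 = \{[x_0:x_1:x_2] \in \mathbb{P}^2(\mathbb{F}_{q^2}) : x_0^{q+1}+x_1^{q+1}+x_2^{q+1}=0\}$, the number of $\mathbb{F}_{q^2}$-rational points is $q^3+1$. -/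
/-!
Write `Z n` for the number of zeros of `x₁ ^ (q + 1) + ⋯ + xₙ ^ (q + 1)` in `F ^ n`. Since
`Fˣ` is cyclic of order `(q + 1) * (q - 1)`, the norm `x ↦ x ^ (q + 1)` is `(q + 1)`-to-one from
`Fˣ` onto the nonzero elements fixed by `x ↦ x ^ q`, and `0` is the norm of `0` only. All sums of
norms are fixed by `x ↦ x ^ q` (a Frobenius power), so solving for the last coordinate gives
`Z (n + 1) + q * Z n = (q + 1) * q ^ (2 * n)`. Hence `Z 3 = q ^ 5 - q ^ 3 + q ^ 2`, and the
`Z 3 - 1` nonzero zeros make up the points of the curve, `q ^ 2 - 1` for each point.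
-/
open Finset
open scoped LinearAlgebra.Projectivization

lemma Projectivization.ncard_ne_zero_and_eq_mul {k V : Type*} [DivisionRing k] [AddCommGroup V]
    [Module k V] (P : V → Prop) (hP : ∀ (c : kˣ) (v : V), P (c • v) ↔ P v) :
    {v : V | v ≠ 0 ∧ P v}.ncard = {x : ℙ k V | P x.rep}.ncard * (Nat.card k - 1) := by
  have hmk (v : {v : V // v ≠ 0}) : P v ↔ P (mk k v.1 v.2).rep := by
    obtain ⟨c, hc⟩ := exists_smul_eq_mk_rep k v.1 v.2
    rw [← hc, hP]
  rw [← Nat.card_coe_set_eq, ← Nat.card_coe_set_eq, ← Nat.card_units, ← Nat.card_prod]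
  exact Nat.card_congr <| (Equiv.subtypeSubtypeEquivSubtypeInter _ P).symm.trans <|
    (Equiv.subtypeEquiv (nonZeroEquivProjectivizationProdUnits k V) hmk).trans
      Equiv.prodSubtypeFstEquivSubtypeProd

lemma Projectivization.ncard_mul_add_one_eq_card_filter {k V : Type*} [DivisionRing k]
    [AddCommGroup V] [Module k V] [Fintype V] (P : V → Prop) [DecidablePred P]
    (hP : ∀ (c : kˣ) (v : V), P (c • v) ↔ P v) (hP0 : P 0) :
    {x : ℙ k V | P x.rep}.ncard * (Nat.card k - 1) + 1 = #{v | P v} := by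
  have hdiff : {v : V | v ≠ 0 ∧ P v} = {v | P v} \ {0} := by
    ext v
    simp [and_comm]
  rw [← ncard_ne_zero_and_eq_mul P hP, hdiff,
    Set.ncard_sdiff_singleton_add_one (s := {v | P v}) hP0 (Set.toFinite _),
    Set.ncard_eq_toFinset_card', Set.toFinset_ofPred]

lemma card_filter_pow_eq_units {M₀ : Type*} [GroupWithZero M₀] [Fintype M₀] [DecidableEq M₀]
    {n : ℕ} (hn : n ≠ 0) (u : M₀ˣ) :
    #{x : M₀ | x ^ n = u} = #{v : M₀ˣ | v ^ n = u} := by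
  symm
  refine card_nbij (↑) (fun v hv => by simpa using congrArg Units.val (mem_filter.1 hv).2)
    (fun v _ w _ h => Units.ext h) (fun x hx => ?_)
  have hx0 : x ≠ 0 := by
    rintro rfl
    exact u.ne_zero (by simpa [zero_pow hn] using (mem_filter.1 hx).2.symm)
  exact ⟨Units.mk0 x hx0, by simpa [Units.ext_iff] using (mem_filter.1 hx).2, rfl⟩

section HermitianCount

variable {F : Type*} [Field F] [Fintype F] {q : ℕ}

lemma exists_ringHom_eq_pow_of_card_eq_sq (hF : Fintype.card F = q ^ 2) :
    ∃ φ : F →+* F, ∀ x, φ x = x ^ q := by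
  obtain ⟨n, hp, hcard⟩ := FiniteField.card F (ringChar F)
  obtain ⟨m, -, rfl⟩ := (Nat.dvd_prime_pow hp).1 (hcard ▸ hF ▸ Dvd.intro _ (sq q).symm)
  have := Fact.mk hp
  have := ExpChar.prime (R := F) hp
  exact ⟨iterateFrobenius F (ringChar F) m, fun x => iterateFrobenius_def ..⟩

lemma neg_sum_pow_succ_pow_eq_self (hF : Fintype.card F = q ^ 2) {ι : Type*}
    (s : Finset ι) (w : ι → F) :
    (-∑ i ∈ s, w i ^ (q + 1)) ^ q = -∑ i ∈ s, w i ^ (q + 1) := by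
  obtain ⟨φ, hφ⟩ := exists_ringHom_eq_pow_of_card_eq_sq hF
  have hnorm (x : F) : (x ^ (q + 1)) ^ q = x ^ (q + 1) := by
    rw [← pow_mul, add_one_mul, pow_add, ← sq, ← hF, FiniteField.pow_card, pow_succ']
  simp only [← hφ, map_neg, map_sum]
  simp only [hφ, hnorm]

variable [DecidableEq F]

lemma card_filter_pow_succ_eq (hF : Fintype.card F = q ^ 2) {t : F} (ht : t ^ q = t) :
    #{x : F | x ^ (q + 1) = t} = if t = 0 then 1 else q + 1 := by
  split_ifs with h0
  · subst h0
    simp [pow_eq_zero_iff, Finset.filter_eq']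
  have hq : q ≠ 0 := by
    rintro rfl
    simp at hF
  have hG : Nat.card Fˣ = (q + 1) * (q - 1) := by
    rw [Nat.card_units, Nat.card_eq_fintype_card, hF, ← Nat.sq_sub_sq, one_pow]
  let ψ : Fˣ →* Fˣ := powMonoidHom (q + 1)
  have hrange : ψ.range = (powMonoidHom (q - 1) : Fˣ →* Fˣ).ker := by
    refine Subgroup.eq_of_le_of_card_ge ?_ ?_
    · rintro _ ⟨u, rfl⟩
      rw [MonoidHom.mem_ker, powMonoidHom_apply, powMonoidHom_apply, ← pow_mul, ← hG,
        pow_card_eq_one']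
    · rw [IsCyclic.card_powMonoidHom_ker, IsCyclic.card_powMonoidHom_range, hG,
        Nat.gcd_mul_left_left, Nat.gcd_mul_right_left, Nat.mul_div_cancel_left _ q.succ_pos]
  have ht' : Units.mk0 t h0 ∈ ψ.range := by
    rw [hrange, MonoidHom.mem_ker, powMonoidHom_apply, Units.ext_iff, Units.val_pow_eq_pow_val,
      Units.val_mk0, Units.val_one, pow_sub₀ t h0 (Nat.one_le_iff_ne_zero.2 hq), pow_one, ht,
      mul_inv_cancel₀ h0]
  calc #{x : F | x ^ (q + 1) = t}
      = #{v : Fˣ | ψ v = Units.mk0 t h0} :=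
        card_filter_pow_eq_units (n := q + 1) q.succ_ne_zero (Units.mk0 t h0)
    _ = #{v : Fˣ | ψ v = 1} := MonoidHom.card_fiber_eq_of_mem_range ψ ht' ⟨1, map_one ψ⟩
    _ = Nat.card ψ.ker := by
      rw [Nat.card_eq_fintype_card, Fintype.card_subtype]
      simp only [MonoidHom.mem_ker]
    _ = q + 1 := by
      rw [IsCyclic.card_powMonoidHom_ker, hG, Nat.gcd_mul_right_left]

lemma card_sum_pow_succ_eq_zero_succ (hF : Fintype.card F = q ^ 2) (n : ℕ) :
    #{w : Fin (n + 1) → F | ∑ i, w i ^ (q + 1) = 0} +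
      q * #{v : Fin n → F | ∑ i, v i ^ (q + 1) = 0} = (q + 1) * (q ^ 2) ^ n := by
  have hfib (v : Fin n → F) :
      #{c : F | ∑ i, (Fin.cons c v : Fin (n + 1) → F) i ^ (q + 1) = 0} =
        if ∑ i, v i ^ (q + 1) = 0 then 1 else q + 1 := by
    simp only [Fin.sum_univ_succ, Fin.cons_zero, Fin.cons_succ, ← eq_neg_iff_add_eq_zero]
    rw [card_filter_pow_succ_eq hF (neg_sum_pow_succ_pow_eq_self hF _ _)]
    simp only [neg_eq_zero]
  have hsplit : #{w : Fin (n + 1) → F | ∑ i, w i ^ (q + 1) = 0} = ∑ v : Fin n → F,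
      #{c : F | ∑ i, (Fin.cons c v : Fin (n + 1) → F) i ^ (q + 1) = 0} := by
    rw [card_filter, ← (Fin.consEquiv fun _ => F).sum_comp, Fintype.sum_prod_type_right]
    simp only [card_filter]
    rfl
  have htotal := card_filter_add_card_filter_not (s := (univ : Finset (Fin n → F)))
    (p := fun v => ∑ i, v i ^ (q + 1) = 0)
  rw [card_univ, Fintype.card_fun, Fintype.card_fin, hF] at htotal
  rw [hsplit, sum_congr rfl fun v _ => hfib v, sum_ite, sum_const, sum_const, smul_eq_mul,
    smul_eq_mul, mul_one, ← htotal]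
  ring

end HermitianCount

theorem stmt_18_general (q : ℕ)
    (F : Type) [Field F] [Fintype F] (hF : Fintype.card F = q ^ 2) :
    {x : Projectivization F (Fin 3 → F) |
        ∑ i, (x.rep i) ^ (q + 1) = 0}.ncard = q ^ 3 + 1 := by
  classical
  have hP (c : Fˣ) (v : Fin 3 → F) :
      ∑ i, (c • v) i ^ (q + 1) = 0 ↔ ∑ i, v i ^ (q + 1) = 0 := by
    simp [Units.smul_def, mul_pow, ← mul_sum]
  have hproj := Projectivization.ncard_mul_add_one_eq_card_filter
    (fun v : Fin 3 → F => ∑ i, v i ^ (q + 1) = 0) hP (by simp)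
  have h0 : #{v : Fin 0 → F | ∑ i, v i ^ (q + 1) = 0} = 1 := by simp
  have h1 := card_sum_pow_succ_eq_zero_succ hF 0
  have h2 := card_sum_pow_succ_eq_zero_succ hF 1
  have h3 := card_sum_pow_succ_eq_zero_succ hF 2
  have hq : 1 < q ^ 2 := hF ▸ Fintype.one_lt_card
  rw [Nat.card_eq_fintype_card, hF] at hproj
  refine Nat.eq_of_mul_eq_mul_right (m := q ^ 2 - 1) (Nat.sub_pos_of_lt hq) ?_
  zify [hq.le] at *
  linear_combination hproj + h3 - q * h2 + q ^ 2 * h1 - q ^ 3 * h0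

theorem stmt_18 (q : ℕ) (hpp : ∃ p k : ℕ, p.Prime ∧ 0 < k ∧ q = p ^ k)
    (F : Type) [Field F] [Fintype F] (hF : Fintype.card F = q ^ 2) :
    {x : Projectivization F (Fin 3 → F) |
        ∑ i, (x.rep i) ^ (q + 1) = 0}.ncard = q ^ 3 + 1 :=
  stmt_18_general q F hF
end
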